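/- Let V be a finite set with |V| = n, let w: V → ℕ be a level function, and let M be a natural number with M > n. For subsets β, β' ⊆ V, β is at least β' in the lexicographic order on level-count vectors (comparing, from the highest level downwards, the number of elements of that level contained in the subset) if and only if Σ_{x ∈ β} M^{w(x)} ≥ Σ_{x ∈ β'} M^{w(x)}. -/
import Mathlib


open scoped Classical

/-- A literal: a propositional variable (indexed by a natural number) or its negation. -/
structure Lit where
  var : ℕ
  pos : Bool
deriving DecidableEq

/-- A clause is a finite set of literals. -/
abbrev Clause := Finset Lit

/-- The variables occurring in a clause. -/
def Clause.varsOf (c : Clause) : Finset ℕ := c.image Lit.var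

/-- A weighted CNF: a finite set of clauses with weights in `ℕ ∪ {∞}`. -/
structure WCNF where
  clauses : Finset Clause
  weight : Clause → ℕ∞

/-- An assignment satisfies a literal. -/
def satLit (β : ℕ → Bool) (l : Lit) : Prop := β l.var = l.pos

/-- An assignment satisfies a clause if it makes some literal true. -/
def satClause (β : ℕ → Bool) (c : Clause) : Prop := ∃ l ∈ c, satLit β l

/-- The cost of an assignment: sum of the weights of the falsified clauses. -/
noncomputable def WCNF.costA (φ : WCNF) (β : ℕ → Bool) : ℕ∞ :=
  ∑ c ∈ φ.clauses.filter (fun c => ¬ satClause β c), φ.weight c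

/-- The cost of a WCNF: the minimum cost over all assignments. -/
noncomputable def WCNF.cost (φ : WCNF) : ℕ∞ := ⨅ β : ℕ → Bool, φ.costA β

/-- The variables of a set of clauses. -/
def cnfVars (C : Finset Clause) : Finset ℕ := C.biUnion Clause.varsOf

/-- The variables of a WCNF. -/
def WCNF.vars (φ : WCNF) : Finset ℕ := cnfVars φ.clauses

/-- The primal graph of a set of clauses: vertices are the variables (all of `ℕ`),
with an edge between distinct variables occurring together in a clause. -/
def primalOf (C : Finset Clause) : SimpleGraph ℕ :=
  SimpleGraph.fromRel (fun u v => ∃ c ∈ C, u ∈ c.varsOf ∧ v ∈ c.varsOf)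

/-- The incidence graph of a set of clauses: the bipartite graph on variables and
clauses joining each clause to the variables it contains. -/
def incOf (C : Finset Clause) : SimpleGraph (ℕ ⊕ Clause) :=
  SimpleGraph.fromRel (fun a b =>
    ∃ x c, a = Sum.inl x ∧ b = Sum.inr c ∧ c ∈ C ∧ x ∈ c.varsOf)

/-- A tree decomposition of a graph `G`: a tree `TG` together with finite bags such that
every vertex occurs in some bag, every edge is covered by a bag, and for each vertex the
nodes whose bags contain it induce a nonempty connected subgraph (hence a subtree). -/
structure TreeDecomp {V T : Type} (G : SimpleGraph V) (TG : SimpleGraph T) where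
  isTree : TG.IsTree
  bag : T → Finset V
  covers_vertex : ∀ v : V, ∃ t, v ∈ bag t
  covers_edge : ∀ u v : V, G.Adj u v → ∃ t, u ∈ bag t ∧ v ∈ bag t
  connected : ∀ v : V, (TG.induce {t | v ∈ bag t}).Connected

/-- `G` has a tree decomposition of width at most `k`. -/
def HasTD {V : Type} (G : SimpleGraph V) (k : ℕ) : Prop :=
  ∃ (T : Type) (TG : SimpleGraph T) (D : TreeDecomp G TG), ∀ t, (D.bag t).card ≤ k + 1

/-- The treewidth of a graph: the minimum width of a tree decomposition (`⊤` if none). -/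
noncomputable def tw {V : Type} (G : SimpleGraph V) : ℕ∞ :=
  sInf {x : ℕ∞ | ∃ k : ℕ, x = k ∧ HasTD G k}

/-- The primal treewidth of a WCNF. -/
noncomputable def WCNF.tw (φ : WCNF) : ℕ∞ := _root_.tw (primalOf φ.clauses)

/-- The incidence treewidth of a WCNF. -/
noncomputable def WCNF.itw (φ : WCNF) : ℕ∞ := _root_.tw (incOf φ.clauses)

/-- A (monotone) weighted CNF with integer weights. -/
structure ZWCNF where
  clauses : Finset Clause
  weight : Clause → ℤ

/-- Cost of an assignment for an integer-weighted CNF. -/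
noncomputable def ZWCNF.costA (φ : ZWCNF) (β : ℕ → Bool) : ℤ :=
  ∑ c ∈ φ.clauses.filter (fun c => ¬ satClause β c), φ.weight c

/-- `v` is the minimum cost of `φ`. -/
def ZWCNF.IsMinCost (φ : ZWCNF) (v : ℤ) : Prop :=
  (∃ β, φ.costA β = v) ∧ ∀ β, v ≤ φ.costA β

/-- A formula is monotone if every literal occurring in it is negative. -/
def ZWCNF.Mono (φ : ZWCNF) : Prop := ∀ c ∈ φ.clauses, ∀ l ∈ c, l.pos = false

noncomputable def ZWCNF.tw (φ : ZWCNF) : ℕ∞ := _root_.tw (primalOf φ.clauses)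

noncomputable def ZWCNF.itw (φ : ZWCNF) : ℕ∞ := _root_.tw (incOf φ.clauses)

/-- A QUBO instance: `H(x) = Σ_i lin i * x_i + Σ_{i<j} quad i j * x_i x_j`
with integer weights supported on a finite set of variables. -/
structure QUBO where
  vars : Finset ℕ
  lin : ℕ → ℤ
  quad : ℕ → ℕ → ℤ
  lin_supp : ∀ i, lin i ≠ 0 → i ∈ vars
  quad_supp : ∀ i j, quad i j ≠ 0 → i ∈ vars ∧ j ∈ vars
  quad_lt : ∀ i j, quad i j ≠ 0 → i < j

/-- Value of a Boolean, identifying `true` with `1` and `false` with `0`. -/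
def bval (b : Bool) : ℤ := if b then 1 else 0

/-- Evaluation of a QUBO Hamiltonian on a `{0,1}`-assignment. -/
def QUBO.eval (H : QUBO) (x : ℕ → Bool) : ℤ :=
  (∑ i ∈ H.vars, H.lin i * bval (x i)) +
    ∑ i ∈ H.vars, ∑ j ∈ H.vars, H.quad i j * bval (x i) * bval (x j)

/-- A ground state: an assignment minimizing `H`. -/
def QUBO.IsGround (H : QUBO) (x : ℕ → Bool) : Prop := ∀ y, H.eval x ≤ H.eval y

/-- `μ` is the minimum value of `H`. -/
def QUBO.IsMinVal (H : QUBO) (μ : ℤ) : Prop :=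
  (∃ x, H.eval x = μ) ∧ ∀ x, μ ≤ H.eval x

/-- The primal graph of a QUBO: an edge `{i,j}` whenever the quadratic weight is nonzero. -/
def QUBO.primal (H : QUBO) : SimpleGraph ℕ :=
  SimpleGraph.fromRel (fun i j => H.quad i j ≠ 0)

/-- The incidence graph of a QUBO: bipartite graph on variables and nonzero terms
(linear terms indexed by a variable, quadratic terms by a pair of variables). -/
def QUBO.inc (H : QUBO) : SimpleGraph (ℕ ⊕ (ℕ ⊕ ℕ × ℕ)) :=
  SimpleGraph.fromRel (fun a b =>
    (∃ i, a = Sum.inl i ∧ b = Sum.inr (Sum.inl i) ∧ H.lin i ≠ 0) ∨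
    (∃ x i j, a = Sum.inl x ∧ b = Sum.inr (Sum.inr (i, j)) ∧ H.quad i j ≠ 0 ∧ (x = i ∨ x = j)))

noncomputable def QUBO.tw (H : QUBO) : ℕ∞ := _root_.tw H.primal

noncomputable def QUBO.itw (H : QUBO) : ℕ∞ := _root_.tw H.inc

/-- An assignment satisfies an (unweighted) CNF if it satisfies every clause. -/
def satCNF (β : ℕ → Bool) (φ : Finset Clause) : Prop := ∀ c ∈ φ, satClause β c

/-- The weight of an assignment: the sum of weights of the variables set to true. -/
noncomputable def wOf (φ : Finset Clause) (w : ℕ → ℕ) (β : ℕ → Bool) : ℕ :=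
  ∑ x ∈ (cnfVars φ).filter (fun x => β x = true), w x

/-- The satisfying assignments of a CNF, represented as the subsets of its variable set
consisting of the variables set to true. -/
noncomputable def satSets (φ : Finset Clause) : Finset (Finset ℕ) :=
  (cnfVars φ).powerset.filter (fun S => ∀ c ∈ φ, ∃ l ∈ c, ((l.var ∈ S) ↔ l.pos = true))


lemma stmt17_sum_lt_pow (M : ℕ) (g : ℕ → ℕ) (hg : ∀ j, g j < M) (i : ℕ) :
    ∑ j ∈ Finset.range i, g j * M ^ j < M ^ i := by
  induction i with
  | zero => simp
  | succ i ih =>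
    rw [Finset.sum_range_succ, pow_succ]
    have h1 : g i + 1 ≤ M := hg i
    calc (∑ j ∈ Finset.range i, g j * M ^ j) + g i * M ^ i
        < M ^ i + g i * M ^ i := by omega
      _ = (g i + 1) * M ^ i := by ring
      _ ≤ M * M ^ i := Nat.mul_le_mul_right _ h1
      _ = M ^ i * M := by ring

lemma stmt17_key (M : ℕ) (f g : ℕ → ℕ) (hg : ∀ j, g j < M) (N i : ℕ) (hi : i < N)
    (h1 : g i < f i) (h2 : ∀ j, i < j → f j = g j) :
    ∑ j ∈ Finset.range N, g j * M ^ j < ∑ j ∈ Finset.range N, f j * M ^ j := by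
  have hsplit : ∀ h : ℕ → ℕ, ∑ j ∈ Finset.range N, h j * M ^ j
      = ((∑ j ∈ Finset.range i, h j * M ^ j) + h i * M ^ i)
        + ∑ j ∈ Finset.Ico (i+1) N, h j * M ^ j := by
    intro h
    rw [← Finset.sum_range_succ, Finset.sum_range_add_sum_Ico _ (by omega : i+1 ≤ N)]
  rw [hsplit f, hsplit g]
  have heq : ∑ j ∈ Finset.Ico (i+1) N, f j * M ^ j
      = ∑ j ∈ Finset.Ico (i+1) N, g j * M ^ j := by
    refine Finset.sum_congr rfl (fun j hj => ?_)
    rw [h2 j (Finset.mem_Ico.mp hj).1]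
  rw [heq]
  have h3 := stmt17_sum_lt_pow M g hg i
  have h4 : (g i + 1) * M ^ i ≤ f i * M ^ i := Nat.mul_le_mul_right _ h1
  have h5 : (g i + 1) * M ^ i = g i * M ^ i + M ^ i := by ring
  omega

/-- for a finite set `V` of size `n`, a level function `w : V → ℕ`, and
`M > n`, two subsets `β, β' ⊆ V` compare in the lexicographic order on level-count
vectors (from the highest level downwards) exactly as the sums `Σ_{x∈β} M^{w(x)}` and
`Σ_{x∈β'} M^{w(x)}` compare. -/
theorem stmt17 (V : Finset ℕ) (n : ℕ) (hn : V.card = n) (w : ℕ → ℕ) (M : ℕ) (hM : n < M)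
    (β β' : Finset ℕ) (hβ : β ⊆ V) (hβ' : β' ⊆ V) :
    ((∀ i, (β.filter (fun x => w x = i)).card = (β'.filter (fun x => w x = i)).card) ∨
      (∃ i, (β'.filter (fun x => w x = i)).card < (β.filter (fun x => w x = i)).card ∧
        ∀ j, i < j →
          (β.filter (fun x => w x = j)).card = (β'.filter (fun x => w x = j)).card)) ↔
    (∑ x ∈ β', M ^ w x) ≤ ∑ x ∈ β, M ^ w x := by
  classical
  set N := V.sup w + 1 with hN
  have hwlt : ∀ x ∈ V, w x < N := fun x hx =>
    Nat.lt_succ_of_le (Finset.le_sup hx)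
  have hsum : ∀ s : Finset ℕ, s ⊆ V →
      ∑ x ∈ s, M ^ w x
        = ∑ i ∈ Finset.range N, (s.filter (fun x => w x = i)).card * M ^ i := by
    intro s hs
    rw [← Finset.sum_fiberwise_of_maps_to
        (g := w) (t := Finset.range N)
        (fun x hx => Finset.mem_range.mpr (hwlt x (hs hx))) (fun x => M ^ w x)]
    refine Finset.sum_congr rfl (fun i _ => ?_)
    rw [Finset.sum_congr rfl (fun x hx => by rw [(Finset.mem_filter.mp hx).2])]
    simp [mul_comm]
  set F := fun i => (β.filter (fun x => w x = i)).card with hF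
  set G := fun i => (β'.filter (fun x => w x = i)).card with hG
  have hFlt : ∀ i, F i < M := fun i =>
    lt_of_le_of_lt (le_trans (Finset.card_le_card (Finset.filter_subset _ _))
      (le_trans (Finset.card_le_card hβ) (le_of_eq hn))) hM
  have hGlt : ∀ i, G i < M := fun i =>
    lt_of_le_of_lt (le_trans (Finset.card_le_card (Finset.filter_subset _ _))
      (le_trans (Finset.card_le_card hβ') (le_of_eq hn))) hM
  have hF0 : ∀ i, N ≤ i → F i = 0 := by
    intro i hi
    simp only [hF, Finset.card_eq_zero, Finset.filter_eq_empty_iff]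
    intro x hx h
    exact absurd (h ▸ hwlt x (hβ hx)) (by omega)
  have hG0 : ∀ i, N ≤ i → G i = 0 := by
    intro i hi
    simp only [hG, Finset.card_eq_zero, Finset.filter_eq_empty_iff]
    intro x hx h
    exact absurd (h ▸ hwlt x (hβ' hx)) (by omega)
  rw [hsum β hβ, hsum β' hβ']
  constructor
  · rintro (heq | ⟨i, h1, h2⟩)
    · exact le_of_eq (Finset.sum_congr rfl (fun i _ => by rw [heq i]))
    · have hi : i < N := by
        by_contra h
        have e1 : (β.filter (fun x => w x = i)).card = 0 := hF0 i (by omega)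
        have e2 : (β'.filter (fun x => w x = i)).card = 0 := hG0 i (by omega)
        omega
      exact le_of_lt (stmt17_key M F G hGlt N i hi h1 h2)
  · intro hle
    by_cases heq : ∀ i, F i = G i
    · exact Or.inl heq
    · push_neg at heq
      obtain ⟨i0, hi0⟩ := heq
      set S := (Finset.range N).filter (fun i => F i ≠ G i) with hS
      have hSne : S.Nonempty := by
        refine ⟨i0, Finset.mem_filter.mpr ⟨Finset.mem_range.mpr ?_, hi0⟩⟩
        by_contra h
        have := hF0 i0 (by omega)
        have := hG0 i0 (by omega)
        omega
      set m := S.max' hSne with hm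
      have hmS := S.max'_mem hSne
      have hmlt : m < N := Finset.mem_range.mp (Finset.mem_filter.mp hmS).1
      have hmne : F m ≠ G m := (Finset.mem_filter.mp hmS).2
      have hhigh : ∀ j, m < j → F j = G j := by
        intro j hj
        by_cases hjN : j < N
        · by_contra h
          have := Finset.le_max' S j (Finset.mem_filter.mpr ⟨Finset.mem_range.mpr hjN, h⟩)
          omega
        · rw [hF0 j (by omega), hG0 j (by omega)]
      rcases lt_or_gt_of_ne hmne with h | h
      · have hk : (∑ j ∈ Finset.range N, F j * M ^ j)
            < ∑ j ∈ Finset.range N, G j * M ^ j :=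
          stmt17_key M G F hFlt N m hmlt h (fun j hj => (hhigh j hj).symm)
        have hk' : (∑ i ∈ Finset.range N, (β.filter (fun x => w x = i)).card * M ^ i)
            < ∑ i ∈ Finset.range N, (β'.filter (fun x => w x = i)).card * M ^ i := hk
        omega
      · exact Or.inr ⟨m, h, hhigh⟩
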